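/- arXiv:1205.3058 — 6 statements merged into one kernel-verified Lean document; each statement's English description precedes it below -/
import Mathlib

section
/- Let G be a connected simple graph on vertex set {1,...,n}, let A be its adjacency matrix, Δ its degree matrix, and L = Δ − A its Laplacian. Let e_k denote the k-th standard basis vector of ℝ^n. Then for any two vertices i and k, the i-th entry of the vector (−L)^{d(i,k)} e_k equals the (i,k) entry of A^{d(i,k)}, where d(i,k) is the graph distance between i and k. -/
open Matrix SimpleGraph

lemma adjPow_eq_zero_of_lt_dist {n : ℕ} (G : SimpleGraph (Fin n)) [DecidableRel G.Adj]
    {m : ℕ} {i k : Fin n} (h : m < G.dist i k) :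
    ((G.adjMatrix ℝ) ^ m) i k = 0 := by
  rw [adjMatrix_pow_apply_eq_card_walk]
  norm_cast
  rw [Fintype.card_eq_zero_iff]
  constructor
  rintro ⟨p, hp⟩
  have := G.dist_le p
  simp only [Set.mem_setOf_eq] at hp
  omega

lemma key {n : ℕ} (G : SimpleGraph (Fin n)) [DecidableRel G.Adj]
    (hconn : G.Connected) (k : Fin n) :
    ∀ m : ℕ, ∀ i : Fin n, m ≤ G.dist i k →
      ((-(G.lapMatrix ℝ)) ^ m) i k = ((G.adjMatrix ℝ) ^ m) i k := by
  intro m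
  induction m with
  | zero => simp
  | succ m ih =>
    intro i him
    rw [pow_succ', pow_succ', Matrix.mul_apply, Matrix.mul_apply]
    apply Finset.sum_congr rfl
    intro j _
    by_cases hji : j = i
    · subst hji
      have h0 : ((G.adjMatrix ℝ) ^ m) j k = 0 :=
        adjPow_eq_zero_of_lt_dist G (by omega)
      rw [ih j (by omega), h0]
      simp
    · have hM : (-(G.lapMatrix ℝ)) i j = (G.adjMatrix ℝ) i j := by
        simp [lapMatrix, degMatrix, Ne.symm hji]
      rw [hM]
      by_cases hadj : G.Adj i j
      · have htri : G.dist i k ≤ G.dist i j + G.dist j k := hconn.dist_triangle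
        have hij : G.dist i j ≤ 1 := by
          have := G.dist_le hadj.toWalk
          simpa using this
        rw [ih j (by omega)]
      · simp [hadj]

/-- For a connected simple graph `G` with Laplacian `L = Δ - A`, the `i`-th entry of
`(-L)^{d(i,k)} e_k` equals the `(i,k)` entry of `A^{d(i,k)}`. -/
theorem stmt_1 {n : ℕ} (G : SimpleGraph (Fin n)) [DecidableRel G.Adj]
    (hconn : G.Connected) (i k : Fin n) :
    ((-(G.lapMatrix ℝ)) ^ (G.dist i k) *ᵥ Pi.single k 1) i =
      ((G.adjMatrix ℝ) ^ (G.dist i k)) i k := by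
  rw [Matrix.mulVec_single]
  simpa using key G hconn k (G.dist i k) i le_rfl
end

section
/- Let G be a connected simple graph on vertex set {1,...,n} with Laplacian L, whose first m vertices are designated as leaders. Suppose (d^1, d^2, ..., d^N) is a sequence of distance vectors (each d^p equals the distance vector of some vertex of G) together with indices k_1,...,k_N ∈ {1,...,m} such that for every p and every q > p, the k_p-th entry of d^q is strictly greater than the k_p-th entry of d^p. Then the N vectors (−L)^{r_p} e_{k_p}, p = 1,...,N, where r_p is the k_p-th entry of d^p and e_{k_p} is the k_p-th standard basis vector of ℝ^n, are linearly independent in ℝ^n. -/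
/-!
The entries of `(-L)^r` see only walks of length at most `r`, so `((-L)^r) v w` vanishes for
`r < d(v, w)`; at `r = d(v, w)` only the adjacency part of `-L = A - Δ` contributes, and the
entry is positive because some neighbour of `v` is one step closer to `w`. Evaluating the vectors `(-L)^{r_p} e_{k_p}` at the vertices `v_p` realising the distance
vectors `d^p` therefore gives a triangular array with nonzero diagonal: for `p < q` the entry
at `v_q` is `((-L)^{r_p}) v_q k_p`, and `d(v_q, k_p) = (d^q)_{k_p} > r_p`.
-/

open Matrix SimpleGraph

theorem linearIndependent_of_apply_eq_zero_of_lt {ι X R : Type*} [LinearOrder ι] [Ring R]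
    [NoZeroDivisors R] {f : ι → X → R} (x : ι → X)
    (h_lt : ∀ p q, p < q → f p (x q) = 0) (h_diag : ∀ q, f q (x q) ≠ 0) :
    LinearIndependent R f := by
  rw [linearIndependent_iff]
  intro l hl
  by_contra hne
  have hsupp : l.support.Nonempty := Finsupp.support_nonempty_iff.mpr hne
  set q := l.support.max' hsupp
  have hq : l q ≠ 0 := Finsupp.mem_support_iff.mp (l.support.max'_mem hsupp)
  have hsum : ∑ p ∈ l.support, l p * f p (x q) = 0 := by
    simpa [Finsupp.linearCombination_apply, Finsupp.sum] using congrFun hl (x q)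
  rw [Finset.sum_eq_single_of_mem q (l.support.max'_mem hsupp) fun p hp hpq =>
    by rw [h_lt p q (lt_of_le_of_ne (l.support.le_max' p hp) hpq), mul_zero]] at hsum
  exact mul_ne_zero hq (h_diag q) hsum

namespace SimpleGraph

variable {V : Type*} {G : SimpleGraph V}

lemma Adj.dist_le_dist_add_one {v u : V} (hadj : G.Adj v u) (w : V) :
    G.dist v w ≤ G.dist u w + 1 := by
  have := hadj.reachable.dist_triangle_left w
  rw [dist_eq_one_iff_adj.mpr hadj] at this
  omega

lemma exists_adj_dist_eq_of_dist_eq_succ {v w : V} {r : ℕ} (h : G.dist v w = r + 1) :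
    ∃ u, G.Adj v u ∧ G.dist u w = r := by
  obtain ⟨p, hp⟩ := exists_walk_of_dist_ne_zero (h.symm ▸ r.succ_ne_zero : G.dist v w ≠ 0)
  cases p with
  | nil => simp at h
  | @cons _ u _ hadj q =>
    have hle := G.dist_le q
    have hge := hadj.dist_le_dist_add_one w
    simp only [Walk.length_cons] at hp
    exact ⟨u, hadj, by omega⟩

variable [Fintype V] [DecidableEq V] [DecidableRel G.Adj] {R : Type*}

lemma neg_lapMatrix_apply_of_ne [AddGroupWithOne R] {v w : V} (h : v ≠ w) :
    (-(G.lapMatrix R)) v w = if G.Adj v w then 1 else 0 := by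
  simp [lapMatrix, degMatrix, h]

lemma neg_lapMatrix_pow_succ_apply [Ring R] {r : ℕ} {v w : V}
    (h : ((-(G.lapMatrix R)) ^ r) v w = 0) :
    ((-(G.lapMatrix R)) ^ (r + 1)) v w =
      ∑ u ∈ G.neighborFinset v, ((-(G.lapMatrix R)) ^ r) u w := by
  rw [pow_succ', mul_apply, ← Finset.sum_filter_add_sum_filter_not Finset.univ (G.Adj v),
    ← neighborFinset_eq_filter]
  rw [Finset.sum_eq_zero (s := Finset.univ.filter (¬G.Adj v ·)), add_zero]
  · refine Finset.sum_congr rfl fun u hu => ?_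
    rw [mem_neighborFinset] at hu
    rw [neg_lapMatrix_apply_of_ne hu.ne, if_pos hu, one_mul]
  · intro u hu
    rw [Finset.mem_filter] at hu
    obtain rfl | hne := eq_or_ne v u
    · rw [h, mul_zero]
    · rw [neg_lapMatrix_apply_of_ne hne, if_neg hu.2, zero_mul]

lemma neg_lapMatrix_pow_apply_eq_zero_of_lt_dist [Ring R] {r : ℕ} {v w : V}
    (h : r < G.dist v w) : ((-(G.lapMatrix R)) ^ r) v w = 0 := by
  induction r generalizing v with
  | zero =>
    obtain rfl | hne := eq_or_ne v w
    · simp at h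
    · simp [one_apply, hne]
  | succ r ih =>
    rw [neg_lapMatrix_pow_succ_apply (ih (by omega))]
    refine Finset.sum_eq_zero fun u hu => ih ?_
    have := ((G.mem_neighborFinset v u).mp hu).dist_le_dist_add_one w
    omega

lemma neg_lapMatrix_pow_apply_pos_of_dist_eq [Ring R] [PartialOrder R] [IsStrictOrderedRing R]
    {r : ℕ} {v w : V} (hvw : G.Reachable v w) (h : G.dist v w = r) :
    0 < ((-(G.lapMatrix R)) ^ r) v w := by
  induction r generalizing v with
  | zero =>
    obtain rfl : v = w := by simpa [hvw] using h
    simp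
  | succ r ih =>
    rw [neg_lapMatrix_pow_succ_apply (neg_lapMatrix_pow_apply_eq_zero_of_lt_dist (by omega))]
    obtain ⟨u, hadj, hu⟩ := exists_adj_dist_eq_of_dist_eq_succ h
    refine Finset.sum_pos' (fun u' hu' => ?_) ⟨u, (G.mem_neighborFinset v u).mpr hadj, ?_⟩
    · rw [mem_neighborFinset] at hu'
      have := hu'.dist_le_dist_add_one w
      obtain hlt | heq := (show r ≤ G.dist u' w by omega).lt_or_eq
      · exact (neg_lapMatrix_pow_apply_eq_zero_of_lt_dist hlt).ge
      · exact (ih (hu'.symm.reachable.trans hvw) heq.symm).le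
    · exact ih (hadj.symm.reachable.trans hvw) hu

end SimpleGraph

/-- Given a connected simple graph on `{1,...,n}` whose first `m` vertices are leaders,
a sequence of distance vectors `d^1,...,d^N` with witness indices `k_1,...,k_N`
satisfying the rule (`(d^q)_{k_p} > (d^p)_{k_p}` for all `q > p`) yields linearly
independent vectors `(-L)^{r_p} e_{k_p}` with `r_p = (d^p)_{k_p}`. -/
theorem stmt_4 {n m N : ℕ} (hm : m ≤ n) (G : SimpleGraph (Fin n)) [DecidableRel G.Adj]
    (hconn : G.Connected)
    (d : Fin N → Fin m → ℕ) (k : Fin N → Fin m)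
    (hd : ∀ p, ∃ v : Fin n, d p = fun j => G.dist v (Fin.castLE hm j))
    (hrule : ∀ p q : Fin N, p < q → d p (k p) < d q (k p)) :
    LinearIndependent ℝ (fun p : Fin N =>
      (-(G.lapMatrix ℝ)) ^ (d p (k p)) *ᵥ Pi.single (Fin.castLE hm (k p)) (1 : ℝ)) := by
  choose v hv using hd
  have hdist : ∀ p j, d p j = G.dist (v p) (Fin.castLE hm j) := fun p j => by rw [hv p]
  simp only [mulVec_single_one]
  refine linearIndependent_of_apply_eq_zero_of_lt v (fun p q hpq => ?_) (fun q => ?_)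
  · exact neg_lapMatrix_pow_apply_eq_zero_of_lt_dist (hdist q (k p) ▸ hrule p q hpq)
  · exact (neg_lapMatrix_pow_apply_pos_of_dist_eq (hconn _ _) (hdist q (k q)).symm).ne'
end

section
/- Let G be a connected simple graph on vertex set {1,...,n} with Laplacian L, whose first m vertices are designated as leaders, and let B be the n×m matrix with B_{ij} = 1 if i = j and 0 otherwise. Let Γ = [B, (−L)B, (−L)^2 B, ..., (−L)^{n−1} B] be the controllability matrix of the system ẋ = −Lx + Bu. Suppose (d^1, d^2, ..., d^N) is a sequence of distance vectors (each d^p equals the distance vector of some vertex of G) such that for every p there exists an index k_p ∈ {1,...,m} with the property that for all q > p, the k_p-th entry of d^q is strictly greater than the k_p-th entry of d^p. Then rank(Γ) ≥ N. -/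
open Matrix SimpleGraph

variable {n : ℕ} (G : SimpleGraph (Fin n)) [DecidableRel G.Adj]

/-- A matrix supported on the graph has `(M^k) v w = 0` when `k < dist v w`. -/
lemma aux_pow_zero (hconn : G.Connected) (M : Matrix (Fin n) (Fin n) ℝ)
    (hM : ∀ v w, v ≠ w → ¬ G.Adj v w → M v w = 0) :
    ∀ (k : ℕ) (v w : Fin n), k < G.dist v w → (M ^ k) v w = 0 := by
  intro k
  induction k with
  | zero =>
    intro v w h
    have : v ≠ w := by
      rintro rfl; simp [SimpleGraph.dist_self] at h
    simp [Matrix.one_apply_ne this]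
  | succ k ih =>
    intro v w h
    rw [pow_succ', Matrix.mul_apply]
    refine Finset.sum_eq_zero fun u _ => ?_
    by_cases hvu : v = u
    · subst hvu
      rw [ih v w (lt_trans (Nat.lt_succ_self k) h), mul_zero]
    by_cases hadj : G.Adj v u
    · have h1 : G.dist v u ≤ 1 := SimpleGraph.dist_le (Walk.cons hadj Walk.nil)
      have htri : G.dist v w ≤ G.dist v u + G.dist u w := hconn.dist_triangle
      have : k < G.dist u w := by omega
      rw [ih u w this, mul_zero]
    · rw [hM v u hvu hadj, zero_mul]

/-- At exact distance, powers of `-L` agree with powers of the adjacency matrix. -/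
lemma aux_pow_dist (hconn : G.Connected) :
    ∀ (k : ℕ) (v w : Fin n), G.dist v w = k →
      ((-(G.lapMatrix ℝ)) ^ k) v w = ((G.adjMatrix ℝ) ^ k) v w := by
  have hL : ∀ v w, v ≠ w → ¬ G.Adj v w → (-(G.lapMatrix ℝ)) v w = 0 := by
    intro v w hne hadj
    simp [lapMatrix, degMatrix, adjMatrix, Matrix.diagonal_apply_ne _ hne, hadj]
  have hA : ∀ v w, v ≠ w → ¬ G.Adj v w → (G.adjMatrix ℝ) v w = 0 := by
    intro v w hne hadj; simp [hadj]
  intro k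
  induction k with
  | zero => intro v w _; rfl
  | succ k ih =>
    intro v w hdist
    rw [pow_succ', pow_succ', Matrix.mul_apply, Matrix.mul_apply]
    refine Finset.sum_congr rfl fun u _ => ?_
    by_cases hvu : v = u
    · subst hvu
      have h0 : ((-(G.lapMatrix ℝ)) ^ k) v w = 0 :=
        aux_pow_zero G hconn _ hL k v w (by omega)
      have h0' : ((G.adjMatrix ℝ) ^ k) v w = 0 :=
        aux_pow_zero G hconn _ hA k v w (by omega)
      rw [h0, h0', mul_zero, mul_zero]
    by_cases hadj : G.Adj v u
    · have hfirst : (-(G.lapMatrix ℝ)) v u = (G.adjMatrix ℝ) v u := by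
        simp [lapMatrix, degMatrix, Matrix.diagonal_apply_ne _ hvu]
      rw [hfirst]
      have h1 : G.dist v u ≤ 1 := SimpleGraph.dist_le (Walk.cons hadj Walk.nil)
      have htri : G.dist v w ≤ G.dist v u + G.dist u w := hconn.dist_triangle
      rcases lt_or_ge k (G.dist u w) with hlt | hge
      · rw [aux_pow_zero G hconn _ hL k u w hlt, aux_pow_zero G hconn _ hA k u w hlt]
      · have : G.dist u w = k := le_antisymm hge (by omega)
        rw [ih u w this]
    · rw [hL v u hvu hadj, hA v u hvu hadj, zero_mul, zero_mul]

lemma aux_pow_dist_ne_zero (hconn : G.Connected) (v w : Fin n) :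
    ((-(G.lapMatrix ℝ)) ^ (G.dist v w)) v w ≠ 0 := by
  rw [aux_pow_dist G hconn _ v w rfl]
  classical
  rw [SimpleGraph.adjMatrix_pow_apply_eq_card_walk]
  obtain ⟨p, hp⟩ := hconn.exists_walk_length_eq_dist v w
  have : Nonempty {p : G.Walk v w // p.length = G.dist v w} := ⟨⟨p, hp⟩⟩
  have hpos : 0 < Fintype.card {p : G.Walk v w // p.length = G.dist v w} :=
    Fintype.card_pos
  have : (0:ℝ) < Fintype.card {p : G.Walk v w // p.length = G.dist v w} := by
    exact_mod_cast hpos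
  exact this.ne'


/-- Lower bound on the rank of the controllability matrix
`Γ = [B, (-L)B, ..., (-L)^{n-1}B]`: any sequence of distance vectors of vertices
satisfying the rule gives `rank Γ ≥ N`. -/
theorem stmt_5 {n m N : ℕ} (hm : m ≤ n) (G : SimpleGraph (Fin n)) [DecidableRel G.Adj]
    (hconn : G.Connected)
    (B : Matrix (Fin n) (Fin m) ℝ)
    (hB : ∀ (i : Fin n) (j : Fin m), B i j = if (i : ℕ) = (j : ℕ) then 1 else 0)
    (Γ : Matrix (Fin n) (Fin n × Fin m) ℝ)
    (hΓ : ∀ (i : Fin n) (p : Fin n × Fin m),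
      Γ i p = ((-(G.lapMatrix ℝ)) ^ (p.1 : ℕ) * B) i p.2)
    (d : Fin N → Fin m → ℕ)
    (hd : ∀ p, ∃ v : Fin n, d p = fun j => G.dist v (Fin.castLE hm j))
    (hrule : ∀ p : Fin N, ∃ kp : Fin m, ∀ q : Fin N, p < q → d p kp < d q kp) :
    N ≤ Γ.rank := by
  classical
  choose v hv using hd
  choose k hk using hrule
  have hL : ∀ a b : Fin n, a ≠ b → ¬ G.Adj a b → (-(G.lapMatrix ℝ)) a b = 0 := by
    intro a b hne hadj
    simp [lapMatrix, degMatrix, adjMatrix, Matrix.diagonal_apply_ne _ hne, hadj]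
  have hdval : ∀ (p : Fin N) (j : Fin m), d p j = G.dist (v p) (Fin.castLE hm j) := by
    intro p j; rw [hv p]
  have hn : ∀ p : Fin N, d p (k p) < n := by
    intro p
    rw [hdval]
    obtain ⟨w, hw⟩ := hconn.exists_walk_length_eq_dist (v p) (Fin.castLE hm (k p))
    have h1 := w.bypass_isPath.length_lt
    have h2 := SimpleGraph.dist_le w.bypass
    simpa [Fintype.card_fin] using lt_of_le_of_lt h2 h1
  set c : Fin N → Fin n × Fin m := fun q => (⟨d q (k q), hn q⟩, k q) with hc
  have hcol : ∀ (i : Fin n) (q : Fin N),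
      Γ i (c q) = ((-(G.lapMatrix ℝ)) ^ (d q (k q))) i (Fin.castLE hm (k q)) := by
    intro i q
    rw [hΓ, Matrix.mul_apply]
    rw [Finset.sum_eq_single (Fin.castLE hm (k q))]
    · rw [hB]; simp [hc]
    · intro b _ hb
      rw [hB]
      have : ¬ ((b : ℕ) = (((c q).2 : Fin m) : ℕ)) := by
        simp only [hc]
        intro hval
        exact hb (Fin.ext (by simpa using hval))
      rw [if_neg this, mul_zero]
    · intro habs; exact absurd (Finset.mem_univ _) habs
  set M : Matrix (Fin N) (Fin N) ℝ := fun p q => Γ (v p) (c q) with hM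
  have hMentry : ∀ p q, M p q =
      ((-(G.lapMatrix ℝ)) ^ (d q (k q))) (v p) (Fin.castLE hm (k q)) := by
    intro p q; rw [hM]; exact hcol (v p) q
  have htri : M.BlockTriangular id := by
    intro p q hlt
    rw [hMentry]
    refine aux_pow_zero G hconn _ hL _ _ _ ?_
    rw [← hdval]
    exact hk q p hlt
  have hdiag : ∀ q, M q q ≠ 0 := by
    intro q
    rw [hMentry, hdval]
    exact aux_pow_dist_ne_zero G hconn _ _
  have hdet : M.det ≠ 0 := by
    rw [Matrix.det_of_upperTriangular htri]
    exact Finset.prod_ne_zero_iff.mpr fun q _ => hdiag q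
  have hunit : IsUnit M := (Matrix.isUnit_iff_isUnit_det M).mpr (isUnit_iff_ne_zero.mpr hdet)
  have hrankM : M.rank = N := by
    rw [Matrix.rank_of_isUnit M hunit, Fintype.card_fin]
  set P : Matrix (Fin N) (Fin n) ℝ := fun p i => if i = v p then 1 else 0 with hP
  set Q : Matrix (Fin n × Fin m) (Fin N) ℝ := fun j q => if j = c q then 1 else 0 with hQ
  have hPQ : P * Γ * Q = M := by
    ext p q
    rw [Matrix.mul_apply]
    have inner : ∀ j, (P * Γ) p j = Γ (v p) j := by
      intro j
      rw [Matrix.mul_apply]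
      simp [hP, ite_mul, Finset.sum_ite_eq]
    simp only [inner, hQ, mul_ite, mul_one, mul_zero]
    rw [Finset.sum_ite_eq' Finset.univ (c q) (fun j => Γ (v p) j)]
    simp [hM]
  calc N = M.rank := hrankM.symm
    _ = (P * Γ * Q).rank := by rw [hPQ]
    _ ≤ (P * Γ).rank := Matrix.rank_mul_le_left _ _
    _ ≤ Γ.rank := Matrix.rank_mul_le_right _ _
end

section
/- Let G be a connected simple graph on vertex set {1,...,n} with Laplacian L and a single leader, vertex 1, and let b = e_1 be the first standard basis vector of ℝ^n. Let Γ = [b, (−L)b, (−L)^2 b, ..., (−L)^{n−1} b] be the controllability matrix. Then rank(Γ) ≥ 1 + max_{i} d(i,1), i.e., the rank of the controllability matrix is at least the number of cells of the distance partition with respect to the leader. -/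
/-!
Write `M = -L`. Off the diagonal `M` is the adjacency matrix, so `(M ^ k) i l` is a sum over walks
of length `k` from `i` to `l`, where a walk may also pause at a vertex, with the (negative) diagonal
entry as weight. Hence `(M ^ k) i l = 0` for `k < d(i, l)`, while for `k = d(i, l)` only geodesics,
which never pause, contribute, so the entry is positive. Picking a vertex `u m` at each distance
`m ≤ D = max_i d(i, 1)` from the leader, the rows `u 0, …, u D` and columns `0, …, D` of `Γ` form an
upper triangular block with positive diagonal, so `rank Γ ≥ D + 1`.
-/

open Matrix SimpleGraph

lemma Matrix.rank_eq_card_of_isUpperTriangular {m R : Type*} [Fintype m] [LinearOrder m]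
    [DecidableEq m] [Field R] {A : Matrix m m R} (hA : A.IsUpperTriangular)
    (hdiag : ∀ i, A i i ≠ 0) : A.rank = Fintype.card m := by
  refine rank_of_isUnit A ((isUnit_iff_isUnit_det A).2 (Ne.isUnit ?_))
  rw [det_of_isUpperTriangular hA]
  exact Finset.prod_ne_zero_iff.2 fun i _ => hdiag i

namespace SimpleGraph

variable {V : Type*} {G : SimpleGraph V}

lemma exists_adj_dist_eq_of_dist_eq_add_one {u w : V} {k : ℕ} (h : G.dist u w = k + 1) :
    ∃ v, G.Adj u v ∧ G.dist v w = k := by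
  obtain ⟨p, hp⟩ := exists_walk_of_dist_ne_zero (G := G) (u := u) (v := w) (by omega)
  cases p with
  | nil => simp at h
  | @cons _ v _ hadj q =>
    refine ⟨v, hadj, le_antisymm ?_ ?_⟩
    · have hq : q.length = k := by simp only [Walk.length_cons, h] at hp; omega
      exact hq ▸ dist_le q
    · have := hadj.reachable.dist_triangle_left w
      rw [dist_eq_one_iff_adj.2 hadj] at this
      omega

lemma exists_dist_eq_of_le {v w : V} {m : ℕ} (hm : m ≤ G.dist v w) : ∃ u, G.dist u w = m := by
  generalize hD : G.dist v w = D at hm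
  induction D generalizing v with
  | zero => exact ⟨v, by omega⟩
  | succ D ih =>
    rcases hm.eq_or_lt with rfl | hlt
    · exact ⟨v, hD⟩
    · obtain ⟨v', -, hv'⟩ := exists_adj_dist_eq_of_dist_eq_add_one hD
      exact ih hv' (by omega)

lemma Reachable.dist_lt_card [Fintype V] {u v : V} (h : G.Reachable u v) :
    G.dist u v < Fintype.card V := by
  obtain ⟨p, hp, hlen⟩ := h.exists_path_of_dist
  exact hlen ▸ hp.length_lt

lemma neg_lapMatrix_apply_of_ne_s6 [Fintype V] [DecidableEq V] [DecidableRel G.Adj] {R : Type*}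
    [AddGroupWithOne R] {i j : V} (h : i ≠ j) : (-G.lapMatrix R) i j = G.adjMatrix R i j := by
  simp [lapMatrix, degMatrix, diagonal_apply_ne _ h]

section Powers

variable [Fintype V] [DecidableEq V] {R : Type*} {M : Matrix V V R}

lemma pow_apply_eq_zero_of_lt_dist [Semiring R]
    (hzero : ∀ i j, i ≠ j → ¬G.Adj i j → M i j = 0) {k : ℕ} {i j : V} (hk : k < G.dist i j) :
    (M ^ k) i j = 0 := by
  induction k generalizing j with
  | zero =>
    have hij : i ≠ j := by rintro rfl; simp at hk
    simp [one_apply_ne hij]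
  | succ k ih =>
    rw [pow_succ, mul_apply]
    refine Finset.sum_eq_zero fun m _ => ?_
    by_cases hmj : m = j
    · subst hmj
      rw [ih (by omega), zero_mul]
    by_cases hadj : G.Adj m j
    · have := hadj.reachable.dist_triangle_right i
      rw [dist_eq_one_iff_adj.2 hadj] at this
      rw [ih (by omega), zero_mul]
    · rw [hzero m j hmj hadj, mul_zero]

lemma pow_dist_apply_pos [Semiring R] [PartialOrder R] [IsStrictOrderedRing R]
    (hzero : ∀ i j, i ≠ j → ¬G.Adj i j → M i j = 0) (hpos : ∀ i j, G.Adj i j → 0 < M i j)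
    {i j : V} (h : G.Reachable i j) : 0 < (M ^ G.dist i j) i j := by
  suffices ∀ k i, G.dist i j = k → G.Reachable i j → 0 < (M ^ k) i j from this _ i rfl h
  intro k
  induction k with
  | zero =>
    intro i hd hr
    rw [(hr.dist_eq_zero_iff).1 hd]
    simp
  | succ k ih =>
    intro i hd hr
    obtain ⟨v, hadj, hv⟩ := exists_adj_dist_eq_of_dist_eq_add_one hd
    rw [pow_succ', mul_apply]
    refine Finset.sum_pos' (fun m _ => ?_) ⟨v, Finset.mem_univ v,
      mul_pos (hpos i v hadj) (ih v hv (hadj.symm.reachable.trans hr))⟩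
    by_cases hmi : m = i
    · subst hmi
      rw [pow_apply_eq_zero_of_lt_dist hzero (by omega), mul_zero]
    by_cases hadj' : G.Adj i m
    · have htri := hadj'.reachable.dist_triangle_left j
      rw [dist_eq_one_iff_adj.2 hadj'] at htri
      rcases (show k ≤ G.dist m j by omega).eq_or_lt with hk | hk
      · exact mul_nonneg (hpos i m hadj').le (ih m hk.symm (hadj'.symm.reachable.trans hr)).le
      · rw [pow_apply_eq_zero_of_lt_dist hzero hk, mul_zero]
    · rw [hzero i m (Ne.symm hmi) hadj', zero_mul]

theorem dist_add_one_le_rank_of_apply_eq_pow_apply [Field R] [LinearOrder R]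
    [IsStrictOrderedRing R] (hzero : ∀ i j, i ≠ j → ¬G.Adj i j → M i j = 0)
    (hpos : ∀ i j, G.Adj i j → 0 < M i j) (hG : G.Preconnected) {n : ℕ}
    {Γ : Matrix V (Fin n) R} {l : V} (hΓ : ∀ i r, Γ i r = (M ^ (r : ℕ)) i l) {v : V}
    (hv : G.dist v l < n) : G.dist v l + 1 ≤ Γ.rank := by
  have hu : ∀ m : Fin (G.dist v l + 1), ∃ u, G.dist u l = m :=
    fun m => exists_dist_eq_of_le (Nat.lt_succ_iff.1 m.2)
  choose u hu using hu
  let S := Γ.submatrix u (Fin.castLE hv)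
  have hS : S.IsUpperTriangular := fun a b (hba : b < a) => by
    simp only [S, submatrix_apply, hΓ]
    exact pow_apply_eq_zero_of_lt_dist hzero (by simpa [hu] using hba)
  have hdiag : ∀ a, S a a ≠ 0 := fun a => by
    simp only [S, submatrix_apply, hΓ, Fin.val_castLE]
    rw [← hu a]
    exact (pow_dist_apply_pos hzero hpos (hG _ _)).ne'
  calc G.dist v l + 1 = S.rank := by
        rw [rank_eq_card_of_isUpperTriangular hS hdiag, Fintype.card_fin]
    _ ≤ Γ.rank := rank_submatrix_le _ _ _

end Powers

end SimpleGraph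

/-- For a connected single-leader network (leader = vertex `1`, i.e. index `0`),
the rank of the controllability matrix `Γ = [b, (-L)b, ..., (-L)^{n-1}b]` with
`b = e_1` is at least `1 +` the maximum distance from the leader. -/
theorem stmt_6 {n : ℕ} (hn : 0 < n) (G : SimpleGraph (Fin n)) [DecidableRel G.Adj]
    (hconn : G.Connected)
    (Γ : Matrix (Fin n) (Fin n) ℝ)
    (hΓ : ∀ (i r : Fin n),
      Γ i r = ((-(G.lapMatrix ℝ)) ^ (r : ℕ) *ᵥ Pi.single (⟨0, hn⟩ : Fin n) 1) i) :
    1 + Finset.univ.sup (fun i : Fin n => G.dist i ⟨0, hn⟩) ≤ Γ.rank := by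
  obtain ⟨v, -, hv⟩ := Finset.exists_mem_eq_sup Finset.univ ⟨⟨0, hn⟩, Finset.mem_univ _⟩
    (fun i : Fin n => G.dist i ⟨0, hn⟩)
  rw [hv, add_comm]
  refine dist_add_one_le_rank_of_apply_eq_pow_apply (M := -G.lapMatrix ℝ) ?_ ?_
    hconn.preconnected (fun i r => by simp [hΓ, mulVec_single]) ?_
  · intro i j hij hadj
    simp [neg_lapMatrix_apply_of_ne_s6 hij, hadj]
  · intro i j hadj
    simp [neg_lapMatrix_apply_of_ne_s6 hadj.ne, hadj]
  · simpa using (hconn.preconnected v ⟨0, hn⟩).dist_lt_card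
end

section
/- Let G be a connected simple graph on vertex set {1,...,n} with Laplacian L, whose first m vertices are designated as leaders, and let B be the n×m matrix with B_{ij} = 1 if i = j and 0 otherwise. Let Γ = [B, (−L)B, ..., (−L)^{n−1}B] be the controllability matrix. If π is a leader-invariant external equitable partition of G with cells C_1,...,C_r (each leader forming a singleton cell), then rank(Γ) ≤ r. -/
open Matrix SimpleGraph

/-- Upper bound: if `π` is a leader-invariant external equitable partition of a connected
network `G` with `r` cells (given by a surjective cell-assignment map `c : V → Fin r`
with each leader in a singleton cell), then the rank of the controllability matrix
`Γ = [B, (-L)B, ..., (-L)^{n-1}B]` is at most `r`. -/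
theorem stmt_9 {n m r : ℕ} (hm : m ≤ n) (G : SimpleGraph (Fin n)) [DecidableRel G.Adj]
    (hconn : G.Connected)
    (B : Matrix (Fin n) (Fin m) ℝ)
    (hB : ∀ (i : Fin n) (j : Fin m), B i j = if (i : ℕ) = (j : ℕ) then 1 else 0)
    (Γ : Matrix (Fin n) (Fin n × Fin m) ℝ)
    (hΓ : ∀ (i : Fin n) (p : Fin n × Fin m),
      Γ i p = ((-(G.lapMatrix ℝ)) ^ (p.1 : ℕ) * B) i p.2)
    (c : Fin n → Fin r) (hsurj : Function.Surjective c)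
    (heep : ∀ i j : Fin r, i ≠ j → ∀ u v : Fin n, c u = i → c v = i →
      (Finset.univ.filter fun w => G.Adj u w ∧ c w = j).card =
      (Finset.univ.filter fun w => G.Adj v w ∧ c w = j).card)
    (hleader : ∀ (j : Fin m) (v : Fin n), c v = c (Fin.castLE hm j) → v = Fin.castLE hm j) :
    Γ.rank ≤ r := by
  classical
  set L : Matrix (Fin n) (Fin n) ℝ := G.lapMatrix ℝ with hL
  -- The subspace of cell-wise constant vectors
  set W : Submodule ℝ (Fin n → ℝ) := LinearMap.range (LinearMap.funLeft ℝ ℝ c) with hW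
  have memW : ∀ x : Fin n → ℝ, (∃ y : Fin r → ℝ, ∀ v, x v = y (c v)) → x ∈ W := by
    rintro x ⟨y, hy⟩
    exact ⟨y, by funext v; exact (hy v).symm⟩
  -- Key computation: (-L) x at u, for x = y ∘ c, expressed via cell counts
  have key : ∀ (y : Fin r → ℝ) (u : Fin n),
      ((-L) *ᵥ (fun v => y (c v))) u =
      ∑ j : Fin r, ((Finset.univ.filter fun w => G.Adj u w ∧ c w = j).card : ℝ)
        * (y j - y (c u)) := by
    intro y u
    have h1 : ((-L) *ᵥ (fun v => y (c v))) u =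
        (∑ w ∈ G.neighborFinset u, y (c w)) - G.degree u * y (c u) := by
      rw [neg_mulVec, Pi.neg_apply, hL, lapMatrix_mulVec_apply]
      ring
    have hdeg : (G.degree u : ℝ) = ∑ w ∈ G.neighborFinset u, (1 : ℝ) := by
      rw [SimpleGraph.degree, Finset.card_eq_sum_ones]
      push_cast
      rfl
    have h2 : (∑ w ∈ G.neighborFinset u, y (c w)) - G.degree u * y (c u)
        = ∑ w ∈ G.neighborFinset u, (y (c w) - y (c u)) := by
      rw [Finset.sum_sub_distrib, hdeg, Finset.sum_mul, one_mul]
    have h3 : ∑ w ∈ G.neighborFinset u, (y (c w) - y (c u))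
        = ∑ j : Fin r, ∑ w ∈ (G.neighborFinset u).filter (fun w => c w = j),
            (y (c w) - y (c u)) :=
      (Finset.sum_fiberwise (G.neighborFinset u) c fun w => y (c w) - y (c u)).symm
    rw [h1, h2, h3]
    refine Finset.sum_congr rfl fun j _ => ?_
    have hfil : (G.neighborFinset u).filter (fun w => c w = j)
        = Finset.univ.filter fun w => G.Adj u w ∧ c w = j := by
      ext w
      simp [SimpleGraph.mem_neighborFinset, and_comm]
    rw [Finset.sum_congr rfl (fun w hw => by
        rw [(Finset.mem_filter.mp hw).2]),
      Finset.sum_const, hfil, nsmul_eq_mul]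
  -- Vectors that are constant on cells have images under (-L) constant on cells
  have same : ∀ (y : Fin r → ℝ) (u v : Fin n), c u = c v →
      ((-L) *ᵥ (fun w => y (c w))) u = ((-L) *ᵥ (fun w => y (c w))) v := by
    intro y u v hcv
    rw [key, key, hcv]
    refine Finset.sum_congr rfl fun j _ => ?_
    by_cases hj : c v = j
    · subst hj; simp
    · rw [heep (c v) j hj u v hcv rfl]
  -- W is invariant under mulVec by (-L)
  have inv : ∀ x ∈ W, (-L) *ᵥ x ∈ W := by
    rintro x ⟨y, rfl⟩
    refine memW _ ⟨fun i => ((-L) *ᵥ (fun w => y (c w))) (Function.surjInv hsurj i), fun v => ?_⟩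
    exact same y v (Function.surjInv hsurj (c v)) (Function.surjInv_eq hsurj (c v)).symm
  -- iterates preserve W
  have inv_pow : ∀ (k : ℕ) (x : Fin n → ℝ), x ∈ W → ((-L) ^ k) *ᵥ x ∈ W := by
    intro k
    induction k with
    | zero => intro x hx; simpa using hx
    | succ k ih =>
        intro x hx
        have : (-L) ^ (k + 1) = (-L) * (-L) ^ k := by rw [pow_succ']
        rw [this, ← Matrix.mulVec_mulVec]
        exact inv _ (ih x hx)
  -- columns of B are in W
  have hBmem : ∀ j : Fin m, (fun v => B v j) ∈ W := by
    intro j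
    refine memW _ ⟨fun i => if i = c (Fin.castLE hm j) then 1 else 0, fun v => ?_⟩
    rw [hB]
    by_cases hv : v = Fin.castLE hm j
    · subst hv; simp
    · have h1 : ¬ (v : ℕ) = (j : ℕ) := by
        intro h
        exact hv (Fin.ext (by simpa using h))
      have h2 : ¬ c v = c (Fin.castLE hm j) := fun h => hv (hleader j v h)
      simp [h1, h2]
  -- columns of Γ are in W
  have hcol : ∀ p : Fin n × Fin m, (fun v => Γ v p) ∈ W := by
    intro p
    have : (fun v => Γ v p) = ((-L) ^ (p.1 : ℕ)) *ᵥ (fun w => B w p.2) := by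
      funext v
      rw [hΓ]
      rfl
    rw [this]
    exact inv_pow _ _ (hBmem p.2)
  -- the range of Γ.mulVecLin is contained in W
  have hrange : LinearMap.range Γ.mulVecLin ≤ W := by
    rintro x ⟨u, rfl⟩
    have : Γ.mulVecLin u = ∑ p : Fin n × Fin m, u p • (fun v => Γ v p) := by
      funext v
      simp [Matrix.mulVecLin_apply, Matrix.mulVec, dotProduct, mul_comm]
    rw [this]
    exact Submodule.sum_mem _ fun p _ => Submodule.smul_mem _ _ (hcol p)
  -- conclude
  calc Γ.rank = Module.finrank ℝ (LinearMap.range Γ.mulVecLin) := rfl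
    _ ≤ Module.finrank ℝ W := Submodule.finrank_mono hrange
    _ ≤ Module.finrank ℝ (Fin r → ℝ) := (LinearMap.funLeft ℝ ℝ c).finrank_range_le
    _ = r := by simp
end

section
/- Let G be a connected simple graph on vertex set {1,...,n} with Laplacian L, whose first m vertices are designated as leaders, let B be the n×m matrix with B_{ij} = 1 if i = j and 0 otherwise, and let Γ = [B, (−L)B, ..., (−L)^{n−1}B]. Suppose (d^1,...,d^N) is a sequence of distance vectors of vertices of G satisfying the rule (for each p there exists k_p ∈ {1,...,m} such that the k_p-th entry of d^q exceeds that of d^p for all q > p), and suppose π is a leader-invariant external equitable partition of G with r cells. Then N ≤ rank(Γ) ≤ r. -/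
open Matrix SimpleGraph Finset

section Aux

variable {n : ℕ} (G : SimpleGraph (Fin n)) [DecidableRel G.Adj]

lemma negLap_apply' (v w : Fin n) :
    (-(G.lapMatrix ℝ)) v w =
      (if G.Adj v w then (1:ℝ) else 0) - (if v = w then (G.degree v : ℝ) else 0) := by
  simp [lapMatrix, degMatrix, Matrix.sub_apply, Matrix.neg_apply, adjMatrix_apply,
    Matrix.diagonal_apply]

lemma negLap_pow_eq_zero (hconn : G.Connected) :
    ∀ k : ℕ, ∀ v u : Fin n, k < G.dist v u → ((-(G.lapMatrix ℝ)) ^ k) v u = 0 := by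
  intro k
  induction k with
  | zero =>
    intro v u h
    have hne : v ≠ u := by rintro rfl; rw [SimpleGraph.dist_self] at h; omega
    simp [Matrix.one_apply, hne]
  | succ k ih =>
    intro v u h
    rw [pow_succ', Matrix.mul_apply]
    apply Finset.sum_eq_zero
    intro w _
    rcases eq_or_ne v w with rfl | hvw
    · rw [ih v u (by omega), mul_zero]
    · by_cases hadj : G.Adj v w
      · have h1 : G.dist v u ≤ G.dist v w + G.dist w u := hconn.dist_triangle
        have h2 : G.dist v w = 1 := by
          rw [SimpleGraph.dist_eq_one_iff_adj]; exact hadj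
        rw [ih w u (by omega), mul_zero]
      · rw [negLap_apply']
        simp [hadj, hvw]

lemma negLap_pow_pos (hconn : G.Connected) :
    ∀ D : ℕ, ∀ v u : Fin n, G.dist v u = D → 0 < ((-(G.lapMatrix ℝ)) ^ D) v u := by
  intro D
  induction D with
  | zero =>
    intro v u h
    have : v = u := (hconn.dist_eq_zero_iff).mp h
    subst this
    simp [Matrix.one_apply]
  | succ D ih =>
    intro v u h
    obtain ⟨p, hp, hplen⟩ := hconn.exists_path_of_dist v u
    rw [h] at hplen
    cases p with
    | nil => simp at hplen
    | cons hadj q =>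
      rename_i w
      have hqlen : q.length = D := by simpa using hplen
      have hwu : G.dist w u = D := by
        have h1 : G.dist w u ≤ D := hqlen ▸ SimpleGraph.dist_le q
        have h2 : G.dist v u ≤ G.dist v w + G.dist w u := hconn.dist_triangle
        have h3 : G.dist v w = 1 := SimpleGraph.dist_eq_one_iff_adj.mpr hadj
        omega
      rw [pow_succ', Matrix.mul_apply]
      apply Finset.sum_pos'
      · intro x _
        rcases eq_or_ne v x with rfl | hvx
        · rw [negLap_pow_eq_zero G hconn D v u (by omega), mul_zero]
        · by_cases hax : G.Adj v x
          · have h2 : G.dist v u ≤ G.dist v x + G.dist x u := hconn.dist_triangle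
            have h3 : G.dist v x = 1 := SimpleGraph.dist_eq_one_iff_adj.mpr hax
            have : D ≤ G.dist x u := by omega
            rcases lt_or_eq_of_le this with hlt | heq
            · rw [negLap_pow_eq_zero G hconn D x u hlt, mul_zero]
            · have := ih x u heq.symm
              rw [negLap_apply']
              simp [hax, hvx]
              positivity
          · rw [negLap_apply']; simp [hax, hvx]
      · refine ⟨w, Finset.mem_univ w, ?_⟩
        have h1 := ih w u hwu
        have hvw : v ≠ w := hadj.ne
        rw [negLap_apply']
        simp [hadj, hvw]
        positivity

lemma cell_constant {m r : ℕ} (hm : m ≤ n)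
    (B : Matrix (Fin n) (Fin m) ℝ)
    (hB : ∀ (i : Fin n) (j : Fin m), B i j = if (i : ℕ) = (j : ℕ) then 1 else 0)
    (c : Fin n → Fin r) (s : Fin r → Fin n) (hs : ∀ i, c (s i) = i)
    (heep : ∀ i j : Fin r, i ≠ j → ∀ u v : Fin n, c u = i → c v = i →
      (Finset.univ.filter fun w => G.Adj u w ∧ c w = j).card =
      (Finset.univ.filter fun w => G.Adj v w ∧ c w = j).card)
    (hleader : ∀ (j : Fin m) (v : Fin n), c v = c (Fin.castLE hm j) → v = Fin.castLE hm j) :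
    ∀ (k : ℕ) (u v : Fin n), c u = c v →
      ∀ j : Fin m, ((-(G.lapMatrix ℝ)) ^ k * B) u j = ((-(G.lapMatrix ℝ)) ^ k * B) v j := by
  intro k
  induction k with
  | zero =>
    intro u v huv j
    rw [pow_zero, Matrix.one_mul, hB, hB]
    by_cases hu : (u : ℕ) = (j : ℕ)
    · have hu' : u = Fin.castLE hm j := Fin.val_injective (by simpa using hu)
      have hv' : v = Fin.castLE hm j := hleader j v (by rw [← huv, hu'])
      simp [hu', hv']
    · have hv : ¬ ((v : ℕ) = (j : ℕ)) := by
        intro hv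
        have hv' : v = Fin.castLE hm j := Fin.val_injective (by simpa using hv)
        have hu' : u = Fin.castLE hm j := hleader j u (by rw [huv, hv'])
        exact hu (by rw [hu']; simp)
      simp [hu, hv]
  | succ k ih =>
    intro u v huv j
    set X : Matrix (Fin n) (Fin m) ℝ := (-(G.lapMatrix ℝ)) ^ k * B with hXdef
    set f : Fin r → ℝ := fun i => X (s i) j with hfdef
    have hXf : ∀ w : Fin n, X w j = f (c w) := by
      intro w
      exact ih w (s (c w)) (by rw [hs]) j
    have hstep : ∀ w : Fin n, ((-(G.lapMatrix ℝ)) ^ (k+1) * B) w j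
        = ∑ i : Fin r,
            ((Finset.univ.filter fun x => G.Adj w x ∧ c x = i).card : ℝ) * (f i - f (c w)) := by
      intro w
      have h1 : ((-(G.lapMatrix ℝ)) ^ (k+1) * B) w j = ∑ x : Fin n,
          (-(G.lapMatrix ℝ)) w x * X x j := by
        rw [pow_succ', Matrix.mul_assoc, ← hXdef, Matrix.mul_apply]
      rw [h1]
      have h2 : ∀ x : Fin n, (-(G.lapMatrix ℝ)) w x * X x j
          = (if G.Adj w x then f (c x) else 0)
            - (if w = x then (G.degree w : ℝ) * f (c w) else 0) := by
        intro x
        rw [negLap_apply', hXf, sub_mul]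
        congr 1
        · by_cases h : G.Adj w x <;> simp [h]
        · by_cases h : w = x <;> simp [h]
      rw [Finset.sum_congr rfl (fun x _ => h2 x), Finset.sum_sub_distrib,
        Finset.sum_ite_eq Finset.univ w (fun _ => (G.degree w : ℝ) * f (c w))]
      simp only [Finset.mem_univ, if_true]
      have h3 : ∑ x : Fin n, (if G.Adj w x then f (c x) else 0)
          = ∑ i : Fin r, ((Finset.univ.filter fun x => G.Adj w x ∧ c x = i).card : ℝ) * f i := by
        rw [← Finset.sum_fiberwise (g := c) (f := fun x => if G.Adj w x then f (c x) else 0)]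
        refine Finset.sum_congr rfl (fun i _ => ?_)
        have : ∀ x ∈ Finset.univ.filter fun x => c x = i,
            (if G.Adj w x then f (c x) else 0) = (if G.Adj w x then f i else 0) := by
          intro x hx
          rw [Finset.mem_filter] at hx
          rw [hx.2]
        rw [Finset.sum_congr rfl this, Finset.sum_ite, Finset.sum_const, Finset.sum_const_zero,
          add_zero, Finset.filter_filter, nsmul_eq_mul]
        have hset : (Finset.univ.filter fun a => c a = i ∧ G.Adj w a)
            = Finset.univ.filter fun x => G.Adj w x ∧ c x = i := by
          ext a
          simp only [Finset.mem_filter, Finset.mem_univ, true_and]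
          tauto
        rw [hset]
      have h4 : (G.degree w : ℝ)
          = ∑ i : Fin r, ((Finset.univ.filter fun x => G.Adj w x ∧ c x = i).card : ℝ) := by
        have : G.degree w = (Finset.univ.filter fun x => G.Adj w x).card := by
          rw [← G.card_neighborFinset_eq_degree w]
          congr 1
          ext x
          simp [mem_neighborFinset]
        rw [this]
        rw [Finset.card_eq_sum_card_fiberwise (f := c) (t := Finset.univ) (fun x _ => mem_univ _)]
        push_cast
        refine Finset.sum_congr rfl (fun i _ => ?_)
        congr 2
        rw [Finset.filter_filter]
      rw [h3, h4, Finset.sum_mul]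
      rw [← Finset.sum_sub_distrib]
      refine Finset.sum_congr rfl (fun i _ => ?_)
      ring
    rw [hstep u, hstep v]
    refine Finset.sum_congr rfl (fun i _ => ?_)
    rcases eq_or_ne i (c u) with rfl | hne
    · rw [huv]
      ring
    · rw [huv, heep (c u) i (Ne.symm hne) u v rfl huv.symm]

end Aux

/-- Combined bounds: a rule-satisfying sequence of `N` distance vectors and a
leader-invariant external equitable partition with `r` cells sandwich the rank of the
controllability matrix: `N ≤ rank Γ ≤ r`. -/
theorem stmt_10 {n m r N : ℕ} (hm : m ≤ n) (G : SimpleGraph (Fin n)) [DecidableRel G.Adj]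
    (hconn : G.Connected)
    (B : Matrix (Fin n) (Fin m) ℝ)
    (hB : ∀ (i : Fin n) (j : Fin m), B i j = if (i : ℕ) = (j : ℕ) then 1 else 0)
    (Γ : Matrix (Fin n) (Fin n × Fin m) ℝ)
    (hΓ : ∀ (i : Fin n) (p : Fin n × Fin m),
      Γ i p = ((-(G.lapMatrix ℝ)) ^ (p.1 : ℕ) * B) i p.2)
    (d : Fin N → Fin m → ℕ)
    (hd : ∀ p, ∃ v : Fin n, d p = fun j => G.dist v (Fin.castLE hm j))
    (hrule : ∀ p : Fin N, ∃ kp : Fin m, ∀ q : Fin N, p < q → d p kp < d q kp)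
    (c : Fin n → Fin r) (hsurj : Function.Surjective c)
    (heep : ∀ i j : Fin r, i ≠ j → ∀ u v : Fin n, c u = i → c v = i →
      (Finset.univ.filter fun w => G.Adj u w ∧ c w = j).card =
      (Finset.univ.filter fun w => G.Adj v w ∧ c w = j).card)
    (hleader : ∀ (j : Fin m) (v : Fin n), c v = c (Fin.castLE hm j) → v = Fin.castLE hm j) :
    N ≤ Γ.rank ∧ Γ.rank ≤ r := by
  classical
  -- a section of the cell map
  choose s hs using fun i => hsurj i
  -- rows are constant on cells
  have hrow : ∀ u v : Fin n, c u = c v → ∀ p, Γ u p = Γ v p := by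
    intro u v h p
    rw [hΓ, hΓ]
    exact cell_constant G hm B hB c s hs heep hleader (p.1 : ℕ) u v h p.2
  -- upper bound
  have hupper : Γ.rank ≤ r := by
    have hfact : Γ = (Matrix.of fun (v : Fin n) (i : Fin r) => if c v = i then (1:ℝ) else 0) *
        (Matrix.of fun (i : Fin r) (p : Fin n × Fin m) => Γ (s i) p) := by
      ext v p
      rw [Matrix.mul_apply]
      simp only [Matrix.of_apply, ite_mul, one_mul, zero_mul]
      rw [Finset.sum_ite_eq Finset.univ (c v) (fun i => Γ (s i) p)]
      simp only [Finset.mem_univ, if_true]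
      exact hrow v (s (c v)) (by rw [hs]) p
    calc Γ.rank ≤ (Matrix.of fun (v : Fin n) (i : Fin r) =>
            if c v = i then (1:ℝ) else 0).rank := by
          rw [hfact]; exact Matrix.rank_mul_le_left _ _
      _ ≤ Fintype.card (Fin r) := Matrix.rank_le_card_width _
      _ = r := Fintype.card_fin r
  -- lower bound
  have hlower : N ≤ Γ.rank := by
    choose v hv using hd
    have hvd : ∀ p j, d p j = G.dist (v p) (Fin.castLE hm j) := by
      intro p j
      rw [hv p]
    have hdistlt : ∀ a b : Fin n, G.dist a b < n := by
      intro a b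
      obtain ⟨p, hp, hlen⟩ := hconn.exists_path_of_dist a b
      have := hp.length_lt
      rw [hlen] at this
      simpa using this
    have hΓcol : ∀ (u : Fin n) (k : ℕ) (hk : k < n) (j : Fin m),
        Γ u (⟨k, hk⟩, j) = ((-(G.lapMatrix ℝ)) ^ k) u (Fin.castLE hm j) := by
      intro u k hk j
      rw [hΓ]
      simp only
      rw [Matrix.mul_apply, Finset.sum_eq_single (Fin.castLE hm j)]
      · rw [hB]
        simp
      · intro w _ hw
        rw [hB]
        have hne : ¬ ((w : ℕ) = (j : ℕ)) := fun h => hw (Fin.val_injective (by simpa using h))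
        simp [hne]
      · simp
    have hli : LinearIndependent ℝ (fun p : Fin N => Γ (v p)) := by
      rw [linearIndependent_iff']
      intro t g hsum
      suffices h : ∀ (T : ℕ) (i : Fin N), (i : ℕ) = T → i ∈ t → g i = 0 by
        intro i hi
        exact h (i : ℕ) i rfl hi
      intro T
      induction T using Nat.strong_induction_on with
      | _ T IH =>
        intro i hiT hit
        obtain ⟨k, hk⟩ := hrule i
        have hDlt : d i k < n := by rw [hvd]; exact hdistlt _ _
        set col : Fin n × Fin m := (⟨d i k, hDlt⟩, k) with hcoldef
        have hcol := congrFun hsum col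
        simp only [Finset.sum_apply, Pi.smul_apply, smul_eq_mul, Pi.zero_apply] at hcol
        have hzero : ∀ q ∈ t, q ≠ i → g q * Γ (v q) col = 0 := by
          intro q hq hqi
          rcases lt_or_gt_of_ne hqi with hlt | hgt
          · rw [IH (q : ℕ) (by omega) q rfl hq, zero_mul]
          · have hz : Γ (v q) col = 0 := by
              rw [hcoldef, hΓcol]
              apply negLap_pow_eq_zero G hconn
              rw [← hvd]
              exact hk q hgt
            rw [hz, mul_zero]
        rw [Finset.sum_eq_single i hzero (fun h => absurd hit h)] at hcol
        have hpos : 0 < Γ (v i) col := by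
          rw [hcoldef, hΓcol]
          exact negLap_pow_pos G hconn (d i k) (v i) _ (hvd i k).symm
        exact (mul_eq_zero.mp hcol).resolve_right hpos.ne'
    have h1 : Γ.rank = Module.finrank ℝ (Submodule.span ℝ (Set.range Γ)) :=
      Matrix.rank_eq_finrank_span_row Γ
    have h2 : Submodule.span ℝ (Set.range fun p : Fin N => Γ (v p))
        ≤ Submodule.span ℝ (Set.range Γ) := by
      apply Submodule.span_mono
      rintro x ⟨p, rfl⟩
      exact ⟨v p, rfl⟩
    have h3 : Module.finrank ℝ (Submodule.span ℝ (Set.range fun p : Fin N => Γ (v p))) = N := by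
      rw [finrank_span_eq_card hli, Fintype.card_fin]
    rw [h1, ← h3]
    exact Submodule.finrank_mono h2
  exact ⟨hlower, hupper⟩
end
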